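/- arXiv:q-alg/9512033 — 2 statements merged into one kernel-verified Lean document; each statement's English description precedes it below -/
import Mathlib

section
/- Let ι : B_n → B_{n+1} be the group homomorphism with ι(σ_i) = σ_i for all 1 ≤ i ≤ n−1. If ω ∈ W_n^1 is a woven braid of type (n), then both ι(ω) σ_n and ι(ω) σ_n^{−1} are woven braids of type (n+1), i.e. elements of W_{n+1}^1 ⊂ B_{n+1}. (A stabilization move of type II⁺ applied to a woven braid of type (n) yields a woven braid of type (n+1).) -/
/-! Basic setup: the braid group `B_n` as a presented group.  Generators are
indexed by `ℕ`; the generator with index `i` represents `σ_i` for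
`1 ≤ i ≤ n-1`, and all generators with index `0` or `≥ n` are trivialized. -/

/-- The relators of the braid group `B_n`. -/
def braidRels (n : ℕ) : Set (FreeGroup ℕ) :=
  { r | (∃ i, 1 ≤ i ∧ i + 2 ≤ n ∧
          r = .of i * .of (i+1) * .of i * (.of (i+1) * .of i * .of (i+1))⁻¹) ∨
        (∃ i j, 1 ≤ i ∧ i + 2 ≤ j ∧ j + 1 ≤ n ∧
          r = .of i * .of j * (.of j * .of i)⁻¹) ∨
        (∃ i, (i = 0 ∨ n ≤ i) ∧ r = .of i) }

/-- The braid group on `n` strings. -/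
abbrev BraidGroup (n : ℕ) := PresentedGroup (braidRels n)

/-- The standard generator `σ_i` of `B_n` (nontrivial for `1 ≤ i ≤ n-1`). -/
def σ (n i : ℕ) : BraidGroup n := PresentedGroup.of i

/-- The transposition `(i, i+1)` of the strings `{1, …, n}`, as a permutation of `ℕ`. -/
def permOfGen (n i : ℕ) : Equiv.Perm ℕ :=
  if 1 ≤ i ∧ i + 1 ≤ n then Equiv.swap i (i+1) else 1

theorem braidRels_lift (n : ℕ) :
    ∀ r ∈ braidRels n, FreeGroup.lift (permOfGen n) r = 1 := by
  rintro r (⟨i, h1, h2, rfl⟩ | ⟨i, j, h1, h2, h3, rfl⟩ | ⟨i, hi, rfl⟩)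
  · have e1 : permOfGen n i = Equiv.swap i (i+1) := if_pos ⟨h1, by omega⟩
    have e2 : permOfGen n (i+1) = Equiv.swap (i+1) (i+2) := if_pos ⟨by omega, by omega⟩
    simp only [map_mul, map_inv, FreeGroup.lift_apply_of, e1, e2]
    rw [mul_inv_eq_one]
    have l : Equiv.swap i (i+1) * Equiv.swap (i+1) (i+2) * Equiv.swap i (i+1)
        = Equiv.swap i (i+2) := by
      have h := Equiv.swap_mul_swap_mul_swap
        (x := i+2) (y := i+1) (z := i) (by omega) (by omega)
      rwa [Equiv.swap_comm (i+1) i, Equiv.swap_comm (i+2) (i+1)] at h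
    have r : Equiv.swap (i+1) (i+2) * Equiv.swap i (i+1) * Equiv.swap (i+1) (i+2)
        = Equiv.swap i (i+2) := by
      have h := Equiv.swap_mul_swap_mul_swap
        (x := i) (y := i+1) (z := i+2) (by omega) (by omega)
      rwa [Equiv.swap_comm (i+2) i] at h
    rw [l, r]
  · have e1 : permOfGen n i = Equiv.swap i (i+1) := if_pos ⟨h1, by omega⟩
    have e2 : permOfGen n j = Equiv.swap j (j+1) := if_pos ⟨by omega, by omega⟩
    simp only [map_mul, map_inv, FreeGroup.lift_apply_of, e1, e2]
    rw [mul_inv_eq_one]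
    have hd : (Equiv.swap i (i+1)).Disjoint (Equiv.swap j (j+1)) := by
      intro x
      rcases eq_or_ne x i with rfl | hxi
      · right; exact Equiv.swap_apply_of_ne_of_ne (by omega) (by omega)
      rcases eq_or_ne x (i+1) with rfl | hxi1
      · right; exact Equiv.swap_apply_of_ne_of_ne (by omega) (by omega)
      · left; exact Equiv.swap_apply_of_ne_of_ne hxi hxi1
    exact hd.commute
  · have h : permOfGen n i = 1 := if_neg (by omega)
    simp [h]

/-- The canonical projection `Π : B_n → S_n`, sending `σ_i` to the
transposition `(i, i+1)` (strings are `1, …, n`, permutations of `ℕ`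
fixing everything else). -/
def braidPerm (n : ℕ) : BraidGroup n →* Equiv.Perm ℕ :=
  PresentedGroup.toGroup (braidRels_lift n)

theorem braidPerm_σ (n i : ℕ) : braidPerm n (σ n i) = permOfGen n i :=
  PresentedGroup.toGroup.of (braidRels_lift n)

/-- The pure braid group `P_n = ker Π`. -/
def PureBraid (n : ℕ) : Subgroup (BraidGroup n) := (braidPerm n).ker

/-- The standard pure braid generator
`A_{ij} = σ_{j-1} ⋯ σ_{i+1} σ_i² σ_{i+1}⁻¹ ⋯ σ_{j-1}⁻¹`. -/
def A (n i : ℕ) : ℕ → BraidGroup n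
  | 0 => 1
  | j+1 => if j ≤ i then σ n i ^ 2 else σ n j * A n i j * (σ n j)⁻¹

/-- The group `P_n^j` of pure `j`-braids, generated by `A_{ij}` for `1 ≤ i < j`. -/
def P (n j : ℕ) : Subgroup (BraidGroup n) :=
  Subgroup.closure ((fun i => A n i j) '' Set.Ico 1 j)

/-- Partial sums `N_1 = n_1, N_2 = n_1+n_2, …, N_k = n_1+⋯+n_k` of a list. -/
def partialSums : List ℕ → List ℕ
  | [] => []
  | a :: l => a :: (partialSums l).map (a + ·)

/-- The permutation braid `π_{n₁…n_k}`: the product `σ_1 σ_2 ⋯ σ_{n-1}` with the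
letters `σ_{N_1}, …, σ_{N_{k-1}}` omitted. -/
def piBraid (n : ℕ) (ns : List ℕ) : BraidGroup n :=
  (((List.range n).filter fun i => decide (1 ≤ i ∧ i ∉ partialSums ns)).map (σ n)).prod

/-- The permutation braid `π_n = σ_1 σ_2 ⋯ σ_{n-1}`. -/
def piN (n : ℕ) : BraidGroup n := piBraid n [n]

/-- A braid is woven of type `(n₁, …, n_k)` if it can be written as
`π_{n₁…n_k} β_{N_1} β_{N_2} ⋯ β_{N_k}` with each `β_{N_i} ∈ P_n^{N_i}`. -/
def IsWovenOfType (n : ℕ) (ns : List ℕ) (w : BraidGroup n) : Prop :=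
  ∃ b : ℕ → BraidGroup n,
    (∀ m ∈ partialSums ns, b m ∈ P n m) ∧
    w = piBraid n ns * ((partialSums ns).map b).prod

/-- `W_n^1 = π_n P_n^n`, the set of woven braids of type `(n)`. -/
def W1 (n : ℕ) : Set (BraidGroup n) := { w | ∃ b ∈ P n n, w = piN n * b }

/-! Since `ι(π_n) σ_n = π_{n+1}`, we get `ι(π_n β) σ_n = π_{n+1} (σ_n⁻¹ ι(β) σ_n)` and
`ι(π_n β) σ_n⁻¹ = π_{n+1} (σ_n⁻¹ ι(β) σ_n) A_{n,n+1}⁻¹`, as `σ_n² = A_{n,n+1}`. Conjugation by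
`σ_n` carries `P_n^n` into `P_{n+1}^{n+1}` because
`σ_n⁻¹ A_{i,n} σ_n = A_{n,n+1}⁻¹ A_{i,n+1} A_{n,n+1}`. -/

section Stabilization

lemma piN_eq_prod_Ico (n : ℕ) : piN n = ((List.Ico 1 n).map (σ n)).prod := by
  have hfilter : (List.range n).filter (fun i => decide (1 ≤ i ∧ i ∉ partialSums [n]))
      = (List.range n).filter (fun i => 1 ≤ i) :=
    List.filter_congr fun i hi => by simp_all [partialSums, Nat.ne_of_lt]
  rw [piN, piBraid, hfilter, ← List.Ico.zero_bot, List.Ico.filter_le_of_le zero_le_one]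

lemma A_self_succ (m i : ℕ) : A m i (i+1) = σ m i ^ 2 := by
  rw [A, if_pos le_rfl]

lemma A_succ_of_lt {m i j : ℕ} (hij : i < j) :
    A m i (j+1) = σ m j * A m i j * (σ m j)⁻¹ := by
  rw [A, if_neg (not_le.mpr hij)]

lemma A_mem_P {m i j : ℕ} (hi : 1 ≤ i) (hij : i < j) : A m i j ∈ P m j :=
  Subgroup.subset_closure ⟨i, ⟨hi, hij⟩, rfl⟩

variable {n : ℕ} {ι : BraidGroup n →* BraidGroup (n+1)}

lemma map_piN_mul_σ (hn : 1 ≤ n) (hι : ∀ i, 1 ≤ i → i ≤ n - 1 → ι (σ n i) = σ (n+1) i) :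
    ι (piN n) * σ (n+1) n = piN (n+1) := by
  rw [piN_eq_prod_Ico, piN_eq_prod_Ico, List.Ico.succ_top hn, List.map_append,
    List.prod_append, map_list_prod, List.map_map, List.map_singleton, List.prod_singleton]
  congr 2
  refine List.map_congr_left fun i hi => ?_
  obtain ⟨hi1, hin⟩ := List.Ico.mem.mp hi
  exact hι i hi1 (by omega)

lemma map_A (hι : ∀ i, 1 ≤ i → i ≤ n - 1 → ι (σ n i) = σ (n+1) i)
    {i : ℕ} (hi : 1 ≤ i) (hin : i < n) :
    ∀ {j}, j ≤ n → ι (A n i j) = A (n+1) i j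
  | 0, _ => by simp [A]
  | j+1, hj => by
    by_cases hij : j ≤ i
    · rw [A, if_pos hij, A, if_pos hij, map_pow, hι i hi (by omega)]
    · rw [A, if_neg hij, A, if_neg hij, map_mul, map_mul, map_inv, hι j (by omega) (by omega),
        map_A hι hi hin (by omega)]

lemma σ_inv_mul_A_mul_σ_mem_P {i : ℕ} (hi : 1 ≤ i) (hin : i < n) :
    (σ (n+1) n)⁻¹ * A (n+1) i n * σ (n+1) n ∈ P (n+1) (n+1) := by
  have hconj : (σ (n+1) n)⁻¹ * A (n+1) i n * σ (n+1) n
      = (A (n+1) n (n+1))⁻¹ * A (n+1) i (n+1) * A (n+1) n (n+1) := by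
    rw [A_succ_of_lt hin, A_self_succ]; group
  rw [hconj]
  exact mul_mem (mul_mem (inv_mem (A_mem_P (by omega) n.lt_succ_self))
    (A_mem_P hi (by omega))) (A_mem_P (by omega) n.lt_succ_self)

lemma σ_inv_mul_map_mul_σ_mem_P (hι : ∀ i, 1 ≤ i → i ≤ n - 1 → ι (σ n i) = σ (n+1) i)
    {b : BraidGroup n} (hb : b ∈ P n n) :
    (σ (n+1) n)⁻¹ * ι b * σ (n+1) n ∈ P (n+1) (n+1) := by
  let f := (MulAut.conj (σ (n+1) n)⁻¹).toMonoidHom.comp ι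
  have hle : P n n ≤ (P (n+1) (n+1)).comap f := by
    rw [P, Subgroup.closure_le]
    rintro _ ⟨i, ⟨hi, hin⟩, rfl⟩
    simpa [f, map_A hι hi hin le_rfl] using σ_inv_mul_A_mul_σ_mem_P hi hin
  simpa [f] using hle hb

end Stabilization

/-- Let `ι : B_n → B_{n+1}` be the homomorphism with
`ι(σ_i) = σ_i` for `1 ≤ i ≤ n-1`.  If `ω ∈ W_n^1`, then both `ι(ω) σ_n` and
`ι(ω) σ_n⁻¹` lie in `W_{n+1}^1` (a type II⁺ stabilization of a woven braid of
type `(n)` is woven of type `(n+1)`). -/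
theorem stabilization_of_woven (n : ℕ) (hn : 2 ≤ n)
    (ι : BraidGroup n →* BraidGroup (n+1))
    (hι : ∀ i, 1 ≤ i → i ≤ n - 1 → ι (σ n i) = σ (n+1) i)
    (ω : BraidGroup n) (hω : ω ∈ W1 n) :
    ι ω * σ (n+1) n ∈ W1 (n+1) ∧ ι ω * (σ (n+1) n)⁻¹ ∈ W1 (n+1) := by
  obtain ⟨b, hb, rfl⟩ := hω
  have hβ := σ_inv_mul_map_mul_σ_mem_P hι hb
  have hπ := map_piN_mul_σ (by omega) hι
  set c := σ (n+1) n
  have hstab : ι (piN n * b) * c = piN (n+1) * (c⁻¹ * ι b * c) := by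
    rw [map_mul, ← hπ]; group
  have hAn : (c ^ 2)⁻¹ ∈ P (n+1) (n+1) := by
    rw [← A_self_succ]; exact inv_mem (A_mem_P (by omega) n.lt_succ_self)
  refine ⟨⟨_, hβ, hstab⟩, ⟨_, mul_mem hβ hAn, ?_⟩⟩
  rw [← mul_assoc, ← hstab]; group
end

section
/- The homomorphism ∇ : P_n → P_n satisfies: ∇(P_n^j) = P_n^{j−1} for every 3 ≤ j ≤ n, ∇ maps P_n^2 to the trivial subgroup, and ∇^{n−1}(β) = 1 for every β ∈ P_n^n. -/
theorem σ_sq_mem (n i : ℕ) : σ n i ^ 2 ∈ PureBraid n := by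
  have h : braidPerm n (σ n i) ^ 2 = 1 := by
    rw [braidPerm_σ]
    unfold permOfGen
    split_ifs
    · rw [sq]; exact Equiv.swap_mul_self _ _
    · simp
  simpa [PureBraid, MonoidHom.mem_ker, map_pow] using h

theorem A_mem_pure (n i j : ℕ) : A n i j ∈ PureBraid n := by
  induction j with
  | zero => exact one_mem _
  | succ j ih =>
    show A n i (j+1) ∈ _
    rw [A]
    split_ifs
    · exact σ_sq_mem n i
    · simp only [PureBraid, MonoidHom.mem_ker, map_mul, map_inv] at ih ⊢
      simp [ih]

/-- The generator `A_{ij}` as an element of the pure braid group `P_n`. -/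
def Agen (n i j : ℕ) : ↥(PureBraid n) := ⟨A n i j, A_mem_pure n i j⟩

/-- `f` is the homomorphism `∇ : P_n → P_n` of the paper, determined by
`∇(A_{1j}) = 1` and `∇(A_{ij}) = A_{i-1,j-1}` for `i ≥ 2`. -/
def IsNabla (n : ℕ) (f : ↥(PureBraid n) →* ↥(PureBraid n)) : Prop :=
  (∀ j, 1 < j → j ≤ n → f (Agen n 1 j) = 1) ∧
  (∀ i j, 2 ≤ i → i < j → j ≤ n → f (Agen n i j) = Agen n (i-1) (j-1))

/-- Conjugation by `π_n` as a homomorphism `P_n → P_n`, `α ↦ π_n α π_n⁻¹`. -/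
def conjPiHom (n : ℕ) : ↥(PureBraid n) →* ↥(PureBraid n) where
  toFun α := ⟨piN n * ↑α * (piN n)⁻¹,
    Subgroup.Normal.conj_mem (MonoidHom.normal_ker _) ↑α α.2 (piN n)⟩
  map_one' := by ext; simp
  map_mul' a b := by ext; push_cast; group

/-- The product `β ∇(β) ∇²(β) ⋯ ∇^{m-1}(β)`. -/
def weave (n : ℕ) (f : ↥(PureBraid n) →* ↥(PureBraid n)) (m : ℕ)
    (β : ↥(PureBraid n)) : ↥(PureBraid n) :=
  ((List.range m).map fun t => (⇑f)^[t] β).prod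

/-- The set `K_n = { β ∇(β) ∇²(β) ⋯ ∇^{n-2}(β) : β ∈ P_n^n }`. -/
def Kset (n : ℕ) (f : ↥(PureBraid n) →* ↥(PureBraid n)) : Set ↥(PureBraid n) :=
  { k | ∃ β : ↥(PureBraid n), (β : BraidGroup n) ∈ P n n ∧ k = weave n f (n-1) β }

/-! `∇` sends the generators `A_{1j}` of `P_n^j` to `1` and the remaining generators `A_{ij}`
bijectively onto the generators `A_{i-1,j-1}` of `P_n^{j-1}`, so `∇(P_n^j) = P_n^{j-1}`.
Since `P_n^1` is trivial, `n - 1` applications of `∇` kill `P_n^n`. -/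

theorem P_le_pureBraid (n j : ℕ) : P n j ≤ PureBraid n :=
  (Subgroup.closure_le _).2 <| by
    rintro _ ⟨i, -, rfl⟩
    exact A_mem_pure n i j

theorem P_subgroupOf_eq_closure (n j : ℕ) :
    (P n j).subgroupOf (PureBraid n)
      = Subgroup.closure ((fun i => Agen n i j) '' Set.Ico 1 j) := by
  apply Subgroup.map_injective (PureBraid n).subtype_injective
  rw [Subgroup.subgroupOf_map_subtype, inf_eq_left.2 (P_le_pureBraid n j),
    MonoidHom.map_closure, Set.image_image]
  rfl

theorem P_eq_bot_of_le_one (n : ℕ) {j : ℕ} (hj : j ≤ 1) : P n j = ⊥ := by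
  rw [P, Set.Ico_eq_empty (by omega), Set.image_empty, Subgroup.closure_empty]

namespace IsNabla

variable {n : ℕ} {f : ↥(PureBraid n) →* ↥(PureBraid n)}

theorem map_P_subgroupOf (hf : IsNabla n f) {j : ℕ} (hj : j ≤ n) :
    ((P n j).subgroupOf (PureBraid n)).map f = (P n (j - 1)).subgroupOf (PureBraid n) := by
  rw [P_subgroupOf_eq_closure, P_subgroupOf_eq_closure, MonoidHom.map_closure]
  apply le_antisymm
  · rw [Subgroup.closure_le]
    rintro _ ⟨_, ⟨i, ⟨hi1, hij⟩, rfl⟩, rfl⟩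
    obtain rfl | hi2 := eq_or_lt_of_le hi1
    · rw [hf.1 j hij hj]
      exact one_mem _
    · rw [hf.2 i j hi2 hij hj]
      exact Subgroup.subset_closure ⟨i - 1, ⟨by omega, by omega⟩, rfl⟩
  · rw [Subgroup.closure_le]
    rintro _ ⟨i, ⟨hi1, hij⟩, rfl⟩
    refine Subgroup.subset_closure ⟨_, ⟨i + 1, ⟨by omega, by omega⟩, rfl⟩, ?_⟩
    rw [hf.2 (i + 1) j (by omega) (by omega) hj, Nat.add_sub_cancel]

theorem iterate_eq_one_of_mem_P (hf : IsNabla n f) {k : ℕ} (hk : k + 1 ≤ n)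
    {β : ↥(PureBraid n)} (hβ : (β : BraidGroup n) ∈ P n (k + 1)) : f^[k] β = 1 := by
  induction k generalizing β with
  | zero =>
    rw [P_eq_bot_of_le_one n le_rfl, Subgroup.mem_bot] at hβ
    exact Subtype.ext hβ
  | succ k ih =>
    have hfβ : f β ∈ (P n (k + 1)).subgroupOf (PureBraid n) := by
      rw [← Nat.add_sub_cancel (k + 1) 1, ← hf.map_P_subgroupOf hk]
      exact Subgroup.mem_map_of_mem f hβ
    exact ih (by omega) hfβ

end IsNabla

/-- `∇(P_n^j) = P_n^{j-1}` for `3 ≤ j ≤ n`, `∇(P_n^2)` is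
trivial, and `∇^{n-1}(β) = 1` for every `β ∈ P_n^n`. -/
theorem nabla_image_props (n : ℕ) (hn : 2 ≤ n)
    (nabla : ↥(PureBraid n) →* ↥(PureBraid n)) (hnabla : IsNabla n nabla) :
    (∀ j, 3 ≤ j → j ≤ n →
      Subgroup.map nabla ((P n j).subgroupOf (PureBraid n))
        = (P n (j-1)).subgroupOf (PureBraid n)) ∧
    Subgroup.map nabla ((P n 2).subgroupOf (PureBraid n)) = ⊥ ∧
    (∀ β : ↥(PureBraid n), (β : BraidGroup n) ∈ P n n →
      (⇑nabla)^[n-1] β = 1) := by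
  refine ⟨fun j _ hj => hnabla.map_P_subgroupOf hj, ?_, fun β hβ => ?_⟩
  · rw [hnabla.map_P_subgroupOf hn, P_eq_bot_of_le_one n (by omega), Subgroup.bot_subgroupOf]
  · exact hnabla.iterate_eq_one_of_mem_P (by omega) (by rwa [Nat.sub_add_cancel (by omega)])
end
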